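/- For a twist Θ = [[ω̃, v],[0, 0]] ∈ se(3) with ω ∈ ℝ³, 0 < ‖ω‖, the matrix exponential exp(Θ) equals [[exp(ω̃), T(ω)ᵀ v],[0, 1]], where T(ω) is the SO(3)-tangent operator T(ω) = I - (β/2) ω̃ + ((1-α)/‖ω‖²) ω̃². -/

import Mathlib

/-! The powers of the twist are `Θ^(k+1) = [[ω̃^(k+1), ω̃^k v], [0, 0]]`, so the upper-right block
of `exp Θ` is `(∑ ω̃^k / (k+1)!) v`. Since `ω̃³ = -θ² ω̃` with `θ = ‖ω‖`, splitting that series into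
odd and even powers of `ω̃` leaves the series of `(1 - cos θ)/θ²` and `(1 - sin θ/θ)/θ²`, giving
`I + ((1 - cos θ)/θ²) ω̃ + ((1 - sin θ/θ)/θ²) ω̃²`, which is `T(ω)ᵀ` because `ω̃ᵀ = -ω̃`. -/

open Matrix Real

def skew (ω : Fin 3 → ℝ) : Matrix (Fin 3) (Fin 3) ℝ :=
  !![0, -ω 2, ω 1; ω 2, 0, -ω 0; -ω 1, ω 0, 0]

noncomputable def norm3 (ω : Fin 3 → ℝ) : ℝ := Real.sqrt (ω 0 ^ 2 + ω 1 ^ 2 + ω 2 ^ 2)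

def colv (r : Fin 3 → ℝ) : Matrix (Fin 3) (Fin 1) ℝ := fun i _ => r i

def isSO3 (A : Matrix (Fin 3) (Fin 3) ℝ) : Prop := Aᵀ * A = 1 ∧ A.det = 1

def mkSE3 (A : Matrix (Fin 3) (Fin 3) ℝ) (r : Fin 3 → ℝ) :
    Matrix (Fin 3 ⊕ Fin 1) (Fin 3 ⊕ Fin 1) ℝ :=
  Matrix.fromBlocks A (colv r) 0 1

noncomputable def Tso (ω : Fin 3 → ℝ) : Matrix (Fin 3) (Fin 3) ℝ :=
  1 - (2 * (1 - Real.cos (norm3 ω)) / norm3 ω ^ 2 / 2) • skew ω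
    + ((1 - Real.sin (norm3 ω) / norm3 ω) / norm3 ω ^ 2) • (skew ω ^ 2)

open scoped Nat

namespace Matrix

variable {X R l m n o : Type*} [AddCommMonoid R] [TopologicalSpace R]

theorem _root_.HasSum.matrix_fromBlocks {A : X → Matrix n l R} {B : X → Matrix n m R}
    {C : X → Matrix o l R} {D : X → Matrix o m R} {a : Matrix n l R} {b : Matrix n m R}
    {c : Matrix o l R} {d : Matrix o m R} (hA : HasSum A a) (hB : HasSum B b) (hC : HasSum C c)
    (hD : HasSum D d) :
    HasSum (fun x => fromBlocks (A x) (B x) (C x) (D x)) (fromBlocks a b c d) := by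
  refine Pi.hasSum.mpr ?_
  rintro (i | i) <;> refine Pi.hasSum.mpr ?_ <;> rintro (j | j)
  exacts [Pi.hasSum.mp (Pi.hasSum.mp hA i) j, Pi.hasSum.mp (Pi.hasSum.mp hB i) j,
    Pi.hasSum.mp (Pi.hasSum.mp hC i) j, Pi.hasSum.mp (Pi.hasSum.mp hD i) j]

variable {α : Type*} [Semiring α]

theorem fromBlocks_zero_zero_pow_succ [Fintype m] [Fintype n] [DecidableEq m] [DecidableEq n]
    (A : Matrix m m α) (B : Matrix m n α) (k : ℕ) :
    fromBlocks A B 0 (0 : Matrix n n α) ^ (k + 1) = fromBlocks (A ^ (k + 1)) (A ^ k * B) 0 0 := by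
  induction k with
  | zero => simp
  | succ k ih => simp [pow_succ _ (k + 1), ih, fromBlocks_multiply, pow_succ A k]

open NormedSpace

theorem hasSum_exp_series {𝕂 : Type*} [RCLike 𝕂] [Fintype m] [DecidableEq m] (M : Matrix m m 𝕂) :
    HasSum (fun k : ℕ => (k ! : 𝕂)⁻¹ • M ^ k) (exp M) := by
  open scoped Norms.Operator in exact exp_series_hasSum_exp' M

theorem exp_fromBlocks_zero_zero {𝕂 : Type*} [RCLike 𝕂] [Fintype m] [Fintype n] [DecidableEq m]
    [DecidableEq n] (A : Matrix m m 𝕂) (B : Matrix m n 𝕂) {P : Matrix m m 𝕂}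
    (hP : HasSum (fun k : ℕ => ((k + 1)! : 𝕂)⁻¹ • A ^ k) P) :
    exp (fromBlocks A B 0 (0 : Matrix n n 𝕂)) = fromBlocks (exp A) (P * B) 0 1 := by
  set M := fromBlocks A B 0 (0 : Matrix n n 𝕂)
  have hA : HasSum (fun k : ℕ => ((k + 1)! : 𝕂)⁻¹ • A ^ (k + 1)) (exp A - 1) := by
    simpa using (hasSum_nat_add_iff' 1).mpr (hasSum_exp_series A)
  have hB : HasSum (fun k : ℕ => ((k + 1)! : 𝕂)⁻¹ • (A ^ k * B)) (P * B) := by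
    simpa only [Function.comp_def, addMonoidHomMulRight_apply, Matrix.smul_mul] using
      hP.map (addMonoidHomMulRight B) (continuous_id.matrix_mul continuous_const)
  have hM : HasSum (fun k : ℕ => ((k + 1)! : 𝕂)⁻¹ • M ^ (k + 1))
      (fromBlocks (exp A - 1) (P * B) 0 0) := by
    convert hA.matrix_fromBlocks hB hasSum_zero hasSum_zero using 2 with k
    rw [fromBlocks_zero_zero_pow_succ, fromBlocks_smul, smul_zero, smul_zero]
  have h0 : ((0 ! : ℕ) : 𝕂)⁻¹ • M ^ 0 + fromBlocks (exp A - 1) (P * B) 0 0 =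
      fromBlocks (exp A) (P * B) 0 1 := by
    simp [← fromBlocks_one, fromBlocks_add]
  refine (hasSum_exp_series M).unique ?_
  rw [← h0]
  exact hM.zero_add (f := fun k : ℕ => (k ! : 𝕂)⁻¹ • M ^ k)

end Matrix

section PowThree

variable {R M : Type*} [Monoid R] [Monoid M] [MulAction R M] [IsScalarTower R M M] {x : M} {c : R}

theorem pow_two_mul_add_one_of_pow_three_eq_smul (hx : x ^ 3 = c • x) (k : ℕ) :
    x ^ (2 * k + 1) = c ^ k • x := by
  induction k with
  | zero => simp
  | succ k ih =>
    calc x ^ (2 * (k + 1) + 1) = x ^ (2 * k + 1) * x ^ 2 := by rw [← pow_add]; ring_nf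
      _ = c ^ k • x ^ 3 := by rw [ih, smul_mul_assoc, ← pow_succ']
      _ = c ^ (k + 1) • x := by rw [hx, smul_smul, ← pow_succ]

theorem pow_two_mul_add_two_of_pow_three_eq_smul (hx : x ^ 3 = c • x) (k : ℕ) :
    x ^ (2 * k + 2) = c ^ k • x ^ 2 := by
  rw [pow_succ, pow_two_mul_add_one_of_pow_three_eq_smul hx, smul_mul_assoc, ← pow_two]

end PowThree

namespace Real

theorem hasSum_one_sub_cos_div_sq {θ : ℝ} (hθ : θ ≠ 0) :
    HasSum (fun k : ℕ => ((2 * k + 2)! : ℝ)⁻¹ * (-θ ^ 2) ^ k) ((1 - cos θ) / θ ^ 2) := by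
  have h : HasSum (fun k : ℕ => -(θ ^ 2)⁻¹ * ((-1) ^ (k + 1) * θ ^ (2 * (k + 1)) / (2 * (k + 1))!))
      (-(θ ^ 2)⁻¹ * (cos θ - 1)) := by
    simpa using ((hasSum_nat_add_iff' 1).mpr (hasSum_cos θ)).mul_left (-(θ ^ 2)⁻¹)
  rw [show (1 - cos θ) / θ ^ 2 = -(θ ^ 2)⁻¹ * (cos θ - 1) by field_simp; ring]
  refine h.congr_fun fun k => ?_
  rw [show 2 * (k + 1) = 2 * k + 2 by ring, neg_pow, ← pow_mul, pow_succ (-1 : ℝ)]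
  field_simp
  ring

theorem hasSum_one_sub_sin_div_div_sq {θ : ℝ} (hθ : θ ≠ 0) :
    HasSum (fun k : ℕ => ((2 * k + 3)! : ℝ)⁻¹ * (-θ ^ 2) ^ k) ((1 - sin θ / θ) / θ ^ 2) := by
  have h : HasSum
      (fun k : ℕ => -(θ ^ 3)⁻¹ * ((-1) ^ (k + 1) * θ ^ (2 * (k + 1) + 1) / (2 * (k + 1) + 1)!))
      (-(θ ^ 3)⁻¹ * (sin θ - θ)) := by
    simpa using ((hasSum_nat_add_iff' 1).mpr (hasSum_sin θ)).mul_left (-(θ ^ 3)⁻¹)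
  rw [show (1 - sin θ / θ) / θ ^ 2 = -(θ ^ 3)⁻¹ * (sin θ - θ) by field_simp; ring]
  refine h.congr_fun fun k => ?_
  rw [show 2 * (k + 1) + 1 = 2 * k + 3 by ring, neg_pow, ← pow_mul, pow_succ (-1 : ℝ)]
  field_simp
  ring

end Real

theorem hasSum_inv_factorial_succ_smul_pow_of_pow_three {𝔸 : Type*} [Ring 𝔸] [Algebra ℝ 𝔸]
    [TopologicalSpace 𝔸] [ContinuousAdd 𝔸] [ContinuousSMul ℝ 𝔸] {x : 𝔸} {θ : ℝ} (hθ : θ ≠ 0)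
    (hx : x ^ 3 = (-θ ^ 2) • x) :
    HasSum (fun k : ℕ => ((k + 1)! : ℝ)⁻¹ • x ^ k)
      (1 + ((1 - cos θ) / θ ^ 2) • x + ((1 - sin θ / θ) / θ ^ 2) • x ^ 2) := by
  have hodd : HasSum (fun k : ℕ => ((2 * k + 2)! : ℝ)⁻¹ • x ^ (2 * k + 1))
      (((1 - cos θ) / θ ^ 2) • x) :=
    ((Real.hasSum_one_sub_cos_div_sq hθ).smul_const x).congr_fun fun k => by
      rw [pow_two_mul_add_one_of_pow_three_eq_smul hx, smul_smul]
  have heven : HasSum (fun k : ℕ => ((2 * k + 3)! : ℝ)⁻¹ • x ^ (2 * k + 2))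
      (((1 - sin θ / θ) / θ ^ 2) • x ^ 2) :=
    ((Real.hasSum_one_sub_sin_div_div_sq hθ).smul_const (x ^ 2)).congr_fun fun k => by
      rw [pow_two_mul_add_two_of_pow_three_eq_smul hx, smul_smul]
  have hsucc : HasSum (fun n : ℕ => ((n + 2)! : ℝ)⁻¹ • x ^ (n + 1))
      (((1 - cos θ) / θ ^ 2) • x + ((1 - sin θ / θ) / θ ^ 2) • x ^ 2) :=
    HasSum.even_add_odd (f := fun n : ℕ => ((n + 2)! : ℝ)⁻¹ • x ^ (n + 1)) hodd heven
  simpa [add_assoc] using hsucc.zero_add (f := fun k : ℕ => ((k + 1)! : ℝ)⁻¹ • x ^ k)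

theorem norm3_sq (ω : Fin 3 → ℝ) : norm3 ω ^ 2 = ω 0 ^ 2 + ω 1 ^ 2 + ω 2 ^ 2 :=
  Real.sq_sqrt (by positivity)

theorem skew_pow_three (ω : Fin 3 → ℝ) : skew ω ^ 3 = (-norm3 ω ^ 2) • skew ω := by
  rw [norm3_sq, pow_succ, pow_two]
  ext i j
  fin_cases i <;> fin_cases j <;> simp [skew, Matrix.mul_apply, Fin.sum_univ_three] <;> ring

theorem skew_transpose (ω : Fin 3 → ℝ) : (skew ω)ᵀ = -skew ω := by
  ext i j
  fin_cases i <;> fin_cases j <;> simp [skew]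

theorem Tso_transpose (ω : Fin 3 → ℝ) :
    (Tso ω)ᵀ = 1 + ((1 - cos (norm3 ω)) / norm3 ω ^ 2) • skew ω
      + ((1 - sin (norm3 ω) / norm3 ω) / norm3 ω ^ 2) • skew ω ^ 2 := by
  rw [Tso, transpose_add, transpose_sub, transpose_smul, transpose_smul, transpose_one,
    transpose_pow, skew_transpose, neg_sq, smul_neg, sub_neg_eq_add]
  congr 3
  ring

theorem mul_colv (M : Matrix (Fin 3) (Fin 3) ℝ) (v : Fin 3 → ℝ) : M * colv v = colv (M *ᵥ v) := by
  ext i j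
  simp [Matrix.mul_apply, colv, Matrix.mulVec, dotProduct]

theorem exp_se3 (ω v : Fin 3 → ℝ) (h : 0 < norm3 ω) :
    NormedSpace.exp (Matrix.fromBlocks (skew ω) (colv v) (0 : Matrix (Fin 1) (Fin 3) ℝ) (0 : Matrix (Fin 1) (Fin 1) ℝ)) =
      Matrix.fromBlocks (NormedSpace.exp (skew ω)) (colv ((Tso ω)ᵀ *ᵥ v)) (0 : Matrix (Fin 1) (Fin 3) ℝ) (1 : Matrix (Fin 1) (Fin 1) ℝ) := by
  rw [Matrix.exp_fromBlocks_zero_zero (skew ω) (colv v)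
      (hasSum_inv_factorial_succ_smul_pow_of_pow_three h.ne' (skew_pow_three ω)),
    ← Tso_transpose, mul_colv]
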